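/- Bicriteria guarantee from a (α,β)-approximation face-preserving rounding: let P ⊆ ℝ^n be a polytope, c ∈ ℝ^n, A ∈ ℝ^{m×n} with nonnegative entries, b ∈ ℝ_+^m, α > 1. Suppose x* is optimal for min{cᵀx : x ∈ P, Ax ≤ αb}, y* ∈ ℝ_+^m satisfies: x* minimizes (c + Aᵀy*)ᵀx over P, y*_i > 0 implies A_iᵀx* = αb_i, and min_{x∈P}(cᵀx + (y*)ᵀ(Ax − b)) ≤ OPT(1) := min{cᵀx : x ∈ P, Ax ≤ b} (assumed feasible). If x̂ lies on the minimal face of P containing x*, satisfies Ax̂ ≤ β·Ax* componentwise, and A_iᵀx̂ ≥ (A_iᵀx*)/α for every i with A_iᵀx* = αb_i, then cᵀx̂ ≤ OPT(1) and Ax̂ ≤ αβ·b. -/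

import Mathlib

open Matrix Set

/-! The rounded point `x̂` lies on every face of `P` containing `x*`, in particular on the face of
minimisers of the Lagrangian objective `(c + Aᵀy*)ᵀx`, so `x̂` has the same Lagrangian value as `x*`.
Complementary slackness and the lower bound on the tight rows give `(y*)ᵀAx̂ ≥ (y*)ᵀb`, so
`cᵀx̂ ≤ (c + Aᵀy*)ᵀx* - (y*)ᵀb`, which is the Lagrangian dual value at `y*` and hence at most
`OPT(1)`. The packing bound is `Ax̂ ≤ β·Ax* ≤ αβ·b`. -/

theorem ConcaveOn.isExtreme_setOf_isMinOn {𝕜 E β : Type*} [Field 𝕜] [LinearOrder 𝕜]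
    [IsStrictOrderedRing 𝕜] [AddCommGroup E] [Module 𝕜 E] [AddCommMonoid β] [LinearOrder β]
    [IsOrderedCancelAddMonoid β] [Module 𝕜 β] [PosSMulStrictMono 𝕜 β] {f : E → β}
    (hf : ConcaveOn 𝕜 univ f) (A : Set E) : IsExtreme 𝕜 A {x ∈ A | IsMinOn f A x} := by
  refine ⟨sep_subset _ _, fun x₁ hx₁ x₂ hx₂ x ⟨_, hx⟩ hseg => ⟨hx₁, ?_⟩⟩
  have h₁ : f x₁ ≤ f x := hf.left_le_of_le_right trivial trivial hseg (hx hx₂)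
  exact fun y hy => h₁.trans (hx hy)

theorem IsMinOn.csInf_image_eq {α β : Type*} [ConditionallyCompleteLattice β] {f : α → β}
    {s : Set α} {a : α} (ha : a ∈ s) (h : IsMinOn f s a) : sInf (f '' s) = f a :=
  IsLeast.csInf_eq ⟨mem_image_of_mem f ha, forall_mem_image.2 h⟩

theorem Matrix.add_transpose_mulVec_dotProduct {m n R : Type*} [Fintype m] [Fintype n]
    [CommSemiring R] (c : n → R) (A : Matrix m n R) (y : m → R) (x : n → R) :
    (c + Aᵀ *ᵥ y) ⬝ᵥ x = c ⬝ᵥ x + y ⬝ᵥ (A *ᵥ x) := by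
  rw [add_dotProduct, mulVec_transpose, ← dotProduct_mulVec]

theorem Matrix.dotProduct_le_dotProduct_of_le_of_pos {m R : Type*} [Fintype m] [Semiring R]
    [PartialOrder R] [IsOrderedRing R] {y u v : m → R} (hy : ∀ i, 0 ≤ y i)
    (h : ∀ i, 0 < y i → u i ≤ v i) : y ⬝ᵥ u ≤ y ⬝ᵥ v := by
  refine Finset.sum_le_sum fun i _ => (hy i).eq_or_lt.elim (fun h0 => ?_) fun hpos => ?_
  · simp [← h0]
  · exact mul_le_mul_of_nonneg_left (h i hpos) (hy i)

theorem alpha_beta_bicriteria_general {n m : ℕ} (P : Set (Fin n → ℝ))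
    (c : Fin n → ℝ)
    (A : Matrix (Fin m) (Fin n) ℝ)
    (b : Fin m → ℝ)
    (α : ℝ) (hα : 1 < α)
    (OPT1 : ℝ)
    -- x* is optimal for min{cᵀx : x ∈ P, Ax ≤ αb}
    (xstar : Fin n → ℝ) (hxP : xstar ∈ P)
    (hxfeas : ∀ i, A.mulVec xstar i ≤ α * b i)
    -- y* ≥ 0, Lagrangian optimality, support condition, weak duality
    (ystar : Fin m → ℝ) (hy : ∀ i, 0 ≤ ystar i)
    (hmin : ∀ x ∈ P,
      (c + A.transpose.mulVec ystar) ⬝ᵥ xstar ≤ (c + A.transpose.mulVec ystar) ⬝ᵥ x)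
    (hsupp : ∀ i, 0 < ystar i → A.mulVec xstar i = α * b i)
    (hweak : sInf ((fun x => c ⬝ᵥ x + ystar ⬝ᵥ (A.mulVec x - b)) '' P) ≤ OPT1)
    -- x̂ lies on the minimal face of P containing x*, with the (α,β) rounding bounds
    (F : Set (Fin n → ℝ))
    (hFmin : ∀ G : Set (Fin n → ℝ), IsExtreme ℝ P G → xstar ∈ G → F ⊆ G)
    (xhat : Fin n → ℝ) (hxhatF : xhat ∈ F)
    (beta : ℝ) (hbeta : 1 ≤ beta)
    (hround : ∀ i, A.mulVec xhat i ≤ beta * A.mulVec xstar i)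
    (hlower : ∀ i, A.mulVec xstar i = α * b i → A.mulVec xstar i / α ≤ A.mulVec xhat i) :
    c ⬝ᵥ xhat ≤ OPT1 ∧ ∀ i, A.mulVec xhat i ≤ α * beta * b i := by
  set d := c + Aᵀ *ᵥ ystar
  have hconcave : ConcaveOn ℝ univ (d ⬝ᵥ ·) := (dotProductBilin ℝ ℝ d).concaveOn convex_univ
  obtain ⟨hxhatP, hxhat_min⟩ : xhat ∈ P ∧ IsMinOn (d ⬝ᵥ ·) P xhat :=
    hFmin _ (hconcave.isExtreme_setOf_isMinOn P) ⟨hxP, hmin⟩ hxhatF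
  have hsame : d ⬝ᵥ xhat = d ⬝ᵥ xstar := (hxhat_min hxP).antisymm (hmin xhat hxhatP)
  have hdual : d ⬝ᵥ xstar - ystar ⬝ᵥ b ≤ OPT1 := by
    have hlag : (fun x => c ⬝ᵥ x + ystar ⬝ᵥ (A *ᵥ x - b)) = fun x => d ⬝ᵥ x - ystar ⬝ᵥ b := by
      funext x
      rw [add_transpose_mulVec_dotProduct, dotProduct_sub]
      ring
    rwa [hlag, IsMinOn.csInf_image_eq hxP (IsMinOn.sub (f := (d ⬝ᵥ ·)) hmin isMaxOn_const)]
      at hweak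
  have hslack : ystar ⬝ᵥ b ≤ ystar ⬝ᵥ (A *ᵥ xhat) := by
    refine dotProduct_le_dotProduct_of_le_of_pos hy fun i hi => ?_
    have hlower_i := hlower i (hsupp i hi)
    rwa [hsupp i hi, mul_div_cancel_left₀ _ (zero_lt_one.trans hα).ne'] at hlower_i
  refine ⟨?_, fun i => ?_⟩
  · rw [add_transpose_mulVec_dotProduct] at hsame
    linarith
  · calc (A *ᵥ xhat) i ≤ beta * (A *ᵥ xstar) i := hround i
      _ ≤ beta * (α * b i) := mul_le_mul_of_nonneg_left (hxfeas i) (by linarith)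
      _ = α * beta * b i := by ring

/-- bicriteria guarantee from an `(α,β)`-approximation face-preserving
rounding.  With `x*` optimal for the LP with inflated constraints `Ax ≤ αb`, `y* ≥ 0`
certifying Lagrangian optimality with the support condition `y*_i > 0 → A_iᵀx* = αb_i`,
weak duality `g_1(y*) ≤ OPT(1)`, and a rounding `x̂` on the minimal face of `P`
containing `x*` satisfying `Ax̂ ≤ β·Ax*` together with `A_iᵀx̂ ≥ (A_iᵀx*)/α` for the
tight rows, we get `cᵀx̂ ≤ OPT(1)` and `Ax̂ ≤ αβ·b`. -/
theorem alpha_beta_bicriteria {n m : ℕ} (P : Set (Fin n → ℝ))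
    (hpoly : ∃ s : Finset (Fin n → ℝ), P = convexHull ℝ (↑s : Set (Fin n → ℝ)))
    (c : Fin n → ℝ)
    (A : Matrix (Fin m) (Fin n) ℝ) (hA : ∀ i j, 0 ≤ A i j)
    (b : Fin m → ℝ) (hb : ∀ i, 0 ≤ b i)
    (α : ℝ) (hα : 1 < α)
    (OPT1 : ℝ)
    (hOPT1 : OPT1 = sInf ((fun x => c ⬝ᵥ x) '' {x ∈ P | ∀ i, A.mulVec x i ≤ b i}))
    (hfeas1 : {x ∈ P | ∀ i, A.mulVec x i ≤ b i}.Nonempty)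
    -- x* is optimal for min{cᵀx : x ∈ P, Ax ≤ αb}
    (xstar : Fin n → ℝ) (hxP : xstar ∈ P)
    (hxfeas : ∀ i, A.mulVec xstar i ≤ α * b i)
    (hxopt : c ⬝ᵥ xstar
      = sInf ((fun x => c ⬝ᵥ x) '' {x ∈ P | ∀ i, A.mulVec x i ≤ α * b i}))
    -- y* ≥ 0, Lagrangian optimality, support condition, weak duality
    (ystar : Fin m → ℝ) (hy : ∀ i, 0 ≤ ystar i)
    (hmin : ∀ x ∈ P,
      (c + A.transpose.mulVec ystar) ⬝ᵥ xstar ≤ (c + A.transpose.mulVec ystar) ⬝ᵥ x)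
    (hsupp : ∀ i, 0 < ystar i → A.mulVec xstar i = α * b i)
    (hweak : sInf ((fun x => c ⬝ᵥ x + ystar ⬝ᵥ (A.mulVec x - b)) '' P) ≤ OPT1)
    -- x̂ lies on the minimal face of P containing x*, with the (α,β) rounding bounds
    (F : Set (Fin n → ℝ)) (hF : IsExtreme ℝ P F) (hxF : xstar ∈ F)
    (hFmin : ∀ G : Set (Fin n → ℝ), IsExtreme ℝ P G → xstar ∈ G → F ⊆ G)
    (xhat : Fin n → ℝ) (hxhatF : xhat ∈ F)
    (beta : ℝ) (hbeta : 1 ≤ beta)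
    (hround : ∀ i, A.mulVec xhat i ≤ beta * A.mulVec xstar i)
    (hlower : ∀ i, A.mulVec xstar i = α * b i → A.mulVec xstar i / α ≤ A.mulVec xhat i) :
    c ⬝ᵥ xhat ≤ OPT1 ∧ ∀ i, A.mulVec xhat i ≤ α * beta * b i :=
  alpha_beta_bicriteria_general P c A b α hα OPT1 xstar hxP hxfeas ystar hy hmin hsupp hweak F hFmin
    xhat hxhatF beta hbeta hround hlower
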